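/- arXiv:2401.17688 — 8 statements merged into one kernel-verified Lean document; each statement's English description precedes it below -/
import Mathlib

section
/- For every x ∈ (0,∞)^A and every i ∈ {1,…,A}, the Lyapunov function L satisfies x_i · (∂L/∂x_i)(x) = −G_i(x), where G is the drift field extended to (0,∞)^A by the same formula. -/
open scoped BigOperators

/-- `p_i(x) = α_i x_i^β / (∑_j α_j x_j^β)` (real powers). -/
noncomputable def pF (A : ℕ) (α : Fin A → ℝ) (β : ℝ) (x : Fin A → ℝ) (i : Fin A) : ℝ :=
  α i * x i ^ β / ∑ j, α j * x j ^ β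

/-- The drift field `G(x) = (1-r) p(x) + r γ - x` on the positive orthant. -/
noncomputable def GF (A : ℕ) (α : Fin A → ℝ) (β r : ℝ) (γ : Fin A → ℝ)
    (x : Fin A → ℝ) (i : Fin A) : ℝ :=
  (1 - r) * pF A α β x i + r * γ i - x i

/-- The Lyapunov function
`L(x) = -((1-r)/β) log(∑_j α_j x_j^β) - r ∑_i γ_i log x_i + ∑_i x_i`. -/
noncomputable def LF (A : ℕ) (α : Fin A → ℝ) (β r : ℝ) (γ : Fin A → ℝ)
    (x : Fin A → ℝ) : ℝ :=
  -((1 - r) / β) * Real.log (∑ j, α j * x j ^ β)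
    - r * ∑ i, γ i * Real.log (x i) + ∑ i, x i

/-! The gradient identity reduces, coordinate by coordinate, to one-variable calculus: as a function
of `x_i` alone each sum in `L` is its `i`-th summand plus a constant, and the logarithmic derivative
of the partition sum `Z(x) = ∑ α_j x_j^β` satisfies `x_i ∂_i log Z = β p_i(x)`; the factor `1/β` in
front of `log Z` cancels this `β`. -/

theorem HasDerivAt.sum_apply_update {𝕜 F ι : Type*} [NontriviallyNormedField 𝕜]
    [NormedAddCommGroup F] [NormedSpace 𝕜 F] [Fintype ι] [DecidableEq ι]
    {g : ι → 𝕜 → F} {x : ι → 𝕜} {i : ι} {d : F} (h : HasDerivAt (g i) d (x i)) :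
    HasDerivAt (fun t => ∑ j, g j (Function.update x i t j)) d (x i) := by
  have hsplit : (fun t => ∑ j, g j (Function.update x i t j)) =
      fun t => g i t + ∑ j ∈ Finset.univ \ {i}, g j (x j) := by
    funext t
    simp_rw [Function.apply_update g]
    exact Finset.sum_update_of_mem (Finset.mem_univ i) _ _
  rw [hsplit]
  exact h.add_const _

theorem hasDerivAt_log_sum_rpow_update {A : ℕ} {α : Fin A → ℝ} (hα : ∀ j, 0 < α j) (β : ℝ)
    {x : Fin A → ℝ} (hx : ∀ j, 0 < x j) (i : Fin A) :
    HasDerivAt (fun t => Real.log (∑ j, α j * Function.update x i t j ^ β))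
      (β * pF A α β x i / x i) (x i) := by
  have hsum : HasDerivAt (fun t => ∑ j, α j * Function.update x i t j ^ β)
      (α i * (β * x i ^ (β - 1))) (x i) :=
    HasDerivAt.sum_apply_update (g := fun j t => α j * t ^ β)
      ((Real.hasDerivAt_rpow_const (Or.inl (hx i).ne')).const_mul (α i))
  have hZ : 0 < ∑ j, α j * x j ^ β :=
    Finset.sum_pos (fun j _ => mul_pos (hα j) (Real.rpow_pos_of_pos (hx j) β))
      ⟨i, Finset.mem_univ i⟩
  convert hsum.log (by simpa using hZ.ne') using 1
  rw [pF, Function.update_eq_self, Real.rpow_sub_one (hx i).ne']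
  field_simp

theorem lyapunov_partial_deriv_eq_neg_drift_general
    (A : ℕ) (α : Fin A → ℝ) (hα : ∀ i, 0 < α i)
    (β : ℝ) (hβ : β ≠ 0) (r : ℝ)
    (γ : Fin A → ℝ)
    (x : Fin A → ℝ) (hx : ∀ i, 0 < x i) (i : Fin A) :
    ∃ d : ℝ,
      HasDerivAt (fun t : ℝ => LF A α β r γ (Function.update x i t)) d (x i) ∧
      x i * d = -(GF A α β r γ x i) := by
  have hlogZ := hasDerivAt_log_sum_rpow_update hα β hx i
  have hlog := HasDerivAt.sum_apply_update (g := fun j t => γ j * Real.log t) (x := x)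
    ((Real.hasDerivAt_log (hx i).ne').const_mul (γ i))
  have hsum := HasDerivAt.sum_apply_update (g := fun _ t => t) (x := x) (hasDerivAt_id (x i))
  refine ⟨_, ((hlogZ.const_mul _).sub (hlog.const_mul r)).add hsum, ?_⟩
  have hxi := (hx i).ne'
  unfold GF
  field_simp
  ring

/-- for every `x` in the positive orthant and every `i`,
`x_i · (∂L/∂x_i)(x) = -G_i(x)`. -/
theorem lyapunov_partial_deriv_eq_neg_drift
    (A : ℕ) (hA : 2 ≤ A) (α : Fin A → ℝ) (hα : ∀ i, 0 < α i)
    (β : ℝ) (hβ : β ≠ 0) (r : ℝ) (hr : r ∈ Set.Icc (0 : ℝ) 1)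
    (γ : Fin A → ℝ) (hγ0 : ∀ i, 0 ≤ γ i) (hγ1 : ∑ i, γ i = 1)
    (x : Fin A → ℝ) (hx : ∀ i, 0 < x i) (i : Fin A) :
    ∃ d : ℝ,
      HasDerivAt (fun t : ℝ => LF A α β r γ (Function.update x i t)) d (x i) ∧
      x i * d = -(GF A α β r γ x i) :=
  lyapunov_partial_deriv_eq_neg_drift_general A α hα β hβ r γ x hx i
end

section
/- For every x ∈ (0,∞)^A one has ⟨∇L(x), G(x)⟩ = −Σ_{i=1}^A x_i ((∂L/∂x_i)(x))² ≤ 0, with equality if and only if G(x) = 0. In particular L is a Lyapunov function for the flow of G on the positive orthant. -/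
open scoped BigOperators

/-- for every `x` in the positive orthant, with `Li i` the partial
derivative `(∂L/∂x_i)(x)`, one has
`⟨∇L(x), G(x)⟩ = -∑_i x_i (∂L/∂x_i(x))² ≤ 0`, with equality iff `G(x) = 0`. -/
theorem lyapunov_decreases_along_drift
    (A : ℕ) (hA : 2 ≤ A) (α : Fin A → ℝ) (hα : ∀ i, 0 < α i)
    (β : ℝ) (hβ : β ≠ 0) (r : ℝ) (hr : r ∈ Set.Icc (0 : ℝ) 1)
    (γ : Fin A → ℝ) (hγ0 : ∀ i, 0 ≤ γ i) (hγ1 : ∑ i, γ i = 1)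
    (x : Fin A → ℝ) (hx : ∀ i, 0 < x i)
    (Li : Fin A → ℝ)
    (hLi : ∀ i, HasDerivAt (fun t : ℝ => LF A α β r γ (Function.update x i t))
      (Li i) (x i)) :
    (∑ i, Li i * GF A α β r γ x i) = -∑ i, x i * (Li i) ^ 2 ∧
    (∑ i, Li i * GF A α β r γ x i) ≤ 0 ∧
    ((∑ i, Li i * GF A α β r γ x i) = 0 ↔ GF A α β r γ x = 0) := by
  set S : ℝ := ∑ j, α j * x j ^ β with hSdef
  have hS : 0 < S := Finset.sum_pos (fun j _ =>
    mul_pos (hα j) (Real.rpow_pos_of_pos (hx j) β)) ⟨⟨0, by omega⟩, Finset.mem_univ _⟩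
  -- key: x i * Li i = -(GF i)
  have hkey : ∀ i, x i * Li i = -(GF A α β r γ x i) := by
    intro i
    have hxi := (hx i).ne'
    -- derivative of the sum ∑ j, α j * (update x i t j)^β
    have h1 : HasDerivAt (fun t : ℝ => ∑ j, α j * (Function.update x i t j) ^ β)
        (α i * (β * x i ^ (β - 1))) (x i) := by
      have := HasDerivAt.fun_sum (u := Finset.univ)
        (A := fun j (t : ℝ) => α j * (Function.update x i t j) ^ β)
        (A' := fun j => if j = i then α i * (β * x i ^ (β - 1)) else 0)
        (fun j _ => by
          by_cases hj : j = i
          · subst hj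
            have : HasDerivAt (fun t : ℝ => α j * t ^ β)
                (α j * (β * x j ^ (β - 1))) (x j) :=
              ((Real.hasDerivAt_rpow_const (Or.inl (hx j).ne'))).const_mul (α j)
            simpa using this.congr_deriv (by simp)
          · simpa [hj, Function.update_of_ne hj] using
              (hasDerivAt_const (x i) (α j * x j ^ β)))
      simpa [Finset.sum_ite_eq' Finset.univ i] using this
    have h2 : HasDerivAt (fun t : ℝ => ∑ j, γ j * Real.log (Function.update x i t j))
        (γ i * (x i)⁻¹) (x i) := by
      have := HasDerivAt.fun_sum (u := Finset.univ)
        (A := fun j (t : ℝ) => γ j * Real.log (Function.update x i t j))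
        (A' := fun j => if j = i then γ i * (x i)⁻¹ else 0)
        (fun j _ => by
          by_cases hj : j = i
          · subst hj
            have : HasDerivAt (fun t : ℝ => γ j * Real.log t)
                (γ j * (x j)⁻¹) (x j) :=
              (Real.hasDerivAt_log (hx j).ne').const_mul (γ j)
            simpa using this
          · simpa [hj, Function.update_of_ne hj] using
              (hasDerivAt_const (x i) (γ j * Real.log (x j))))
      simpa [Finset.sum_ite_eq' Finset.univ i] using this
    have h3 : HasDerivAt (fun t : ℝ => ∑ j, Function.update x i t j) 1 (x i) := by
      have := HasDerivAt.fun_sum (u := Finset.univ)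
        (A := fun j (t : ℝ) => Function.update x i t j)
        (A' := fun j => if j = i then (1 : ℝ) else 0)
        (fun j _ => by
          by_cases hj : j = i
          · subst hj
            simpa using (hasDerivAt_id' (x := x j)).congr_deriv (by simp)
          · simpa [hj, Function.update_of_ne hj] using
              (hasDerivAt_const (x i) (x j)))
      simpa [Finset.sum_ite_eq' Finset.univ i] using this
    have hSval : (∑ j, α j * (Function.update x i (x i) j) ^ β) = S := by
      simp [Function.update_eq_self, hSdef]
    have hlog : HasDerivAt
        (fun t : ℝ => Real.log (∑ j, α j * (Function.update x i t j) ^ β))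
        ((α i * (β * x i ^ (β - 1))) / S) (x i) := by
      have := h1.log (by rw [hSval]; exact hS.ne')
      simpa [hSval] using this
    have hD : HasDerivAt (fun t : ℝ => LF A α β r γ (Function.update x i t))
        (-((1 - r) / β) * ((α i * (β * x i ^ (β - 1))) / S)
          - r * (γ i * (x i)⁻¹) + 1) (x i) := by
      have := ((hlog.const_mul (-((1 - r) / β))).fun_sub (h2.const_mul r)).fun_add h3
      simpa [LF] using this
    have hLieq : Li i = -((1 - r) / β) * ((α i * (β * x i ^ (β - 1))) / S)
          - r * (γ i * (x i)⁻¹) + 1 := (hLi i).unique hD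
    have hpow : x i ^ (β - 1) = x i ^ β / x i := by
      rw [Real.rpow_sub (hx i), Real.rpow_one]
    rw [hLieq, hpow, GF, pF, ← hSdef]
    field_simp
    ring
  have hterm : ∀ i, Li i * GF A α β r γ x i = -(x i * Li i ^ 2) := by
    intro i
    have h := hkey i
    have hG : GF A α β r γ x i = -(x i * Li i) := by linarith
    rw [hG]; ring
  have hsum : (∑ i, Li i * GF A α β r γ x i) = -∑ i, x i * (Li i) ^ 2 := by
    rw [← Finset.sum_neg_distrib]
    exact Finset.sum_congr rfl fun i _ => hterm i
  have hnonneg : ∀ i ∈ Finset.univ, 0 ≤ x i * (Li i) ^ 2 :=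
    fun i _ => mul_nonneg (hx i).le (sq_nonneg _)
  refine ⟨hsum, ?_, ?_⟩
  · rw [hsum]
    simpa using Finset.sum_nonneg hnonneg
  · rw [hsum, neg_eq_zero]
    rw [Finset.sum_eq_zero_iff_of_nonneg hnonneg]
    constructor
    · intro h
      funext i
      have h0 := h i (Finset.mem_univ i)
      have hLi0 : Li i = 0 := by
        rcases mul_eq_zero.mp h0 with h' | h'
        · exact absurd h' (hx i).ne'
        · exact pow_eq_zero_iff (by norm_num) |>.mp h'
      have h := hkey i
      rw [hLi0, mul_zero] at h
      simp only [Pi.zero_apply]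
      linarith
    · intro h i _
      have h0 : GF A α β r γ x i = 0 := by rw [h]; rfl
      have h := hkey i
      rw [h0, neg_zero] at h
      rcases mul_eq_zero.mp h with h' | h'
      · exact absurd h' (hx i).ne'
      · simp [h']
end

section
/- Assume β ≥ 1. Then the wage-free field G_0 is Lipschitz continuous on the closed simplex Δ: there exists a constant K = K(α, β, A) < ∞ such that ‖G_0(x) − G_0(y)‖ ≤ K‖x − y‖ for all x, y ∈ Δ, where ‖·‖ is the Euclidean norm. -/
open scoped BigOperators

/-- `p_i(x) = α_i x_i^β / (∑_j α_j x_j^β)` (real powers, `0^β = 0` for `β > 0`). -/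
noncomputable def pField (A : ℕ) (α : Fin A → ℝ) (β : ℝ)
    (x : EuclideanSpace ℝ (Fin A)) : EuclideanSpace ℝ (Fin A) :=
  WithLp.toLp 2 (fun i => α i * x i ^ β / ∑ j, α j * x j ^ β)

/-- The wage-free field `G₀(x) = p(x) - x`. -/
noncomputable def G0Field (A : ℕ) (α : Fin A → ℝ) (β : ℝ)
    (x : EuclideanSpace ℝ (Fin A)) : EuclideanSpace ℝ (Fin A) :=
  pField A α β x - x

/-- The closed simplex in `ℝ^A`. -/
def simplexE (A : ℕ) : Set (EuclideanSpace ℝ (Fin A)) :=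
  {x | (∀ i, 0 ≤ x i) ∧ ∑ i, x i = 1}

/-- Lipschitz estimate for `t ↦ t^β` on `[0,1]` when `β ≥ 1`. -/
lemma rpow_lip_aux {β : ℝ} (hβ : 1 ≤ β) {a b : ℝ}
    (ha : a ∈ Set.Icc (0:ℝ) 1) (hb : b ∈ Set.Icc (0:ℝ) 1) :
    |a ^ β - b ^ β| ≤ β * |a - b| := by
  have h := Convex.norm_image_sub_le_of_norm_hasDerivWithin_le
    (f := fun t : ℝ => t ^ β) (f' := fun t : ℝ => β * t ^ (β - 1)) (C := β)
    (fun t _ => (Real.hasDerivAt_rpow_const (Or.inr hβ)).hasDerivWithinAt)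
    (fun t ht => by
      rw [Real.norm_eq_abs, abs_mul, abs_of_nonneg (le_trans zero_le_one hβ),
        abs_of_nonneg (Real.rpow_nonneg ht.1 _)]
      have : t ^ (β - 1) ≤ 1 := Real.rpow_le_one ht.1 ht.2 (by linarith)
      nlinarith [le_trans zero_le_one hβ])
    (convex_Icc 0 1) hb ha
  simpa [Real.norm_eq_abs] using h

lemma coord_le_norm {A : ℕ} (x : EuclideanSpace ℝ (Fin A)) (i : Fin A) :
    |x i| ≤ ‖x‖ := by
  rw [EuclideanSpace.norm_eq]
  have h1 : |x i| = Real.sqrt (|x i| ^ 2) := by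
    rw [Real.sqrt_sq_eq_abs, abs_abs]
  rw [h1]
  apply Real.sqrt_le_sqrt
  have := Finset.single_le_sum (f := fun j => ‖x j‖ ^ 2)
    (fun j _ => sq_nonneg _) (Finset.mem_univ i)
  simpa [Real.norm_eq_abs] using this

/-- for `β ≥ 1`, the wage-free field `G₀` is Lipschitz continuous on the
closed simplex: there is `K < ∞` with `‖G₀(x) - G₀(y)‖ ≤ K ‖x - y‖` for all `x, y ∈ Δ`. -/
theorem wage_free_field_lipschitz_on_simplex
    (A : ℕ) (hA : 2 ≤ A) (α : Fin A → ℝ) (hα : ∀ i, 0 < α i)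
    (β : ℝ) (hβ : 1 ≤ β) :
    ∃ K : ℝ, ∀ x ∈ simplexE A, ∀ y ∈ simplexE A,
      ‖G0Field A α β x - G0Field A α β y‖ ≤ K * ‖x - y‖ := by
  have hApos : 0 < A := by omega
  haveI : Nonempty (Fin A) := ⟨⟨0, hApos⟩⟩
  set m : ℝ := Finset.univ.inf' Finset.univ_nonempty α with hm
  have hmpos : 0 < m := by
    obtain ⟨j, _, hj⟩ := Finset.exists_mem_eq_inf' Finset.univ_nonempty α
    rw [hm, hj]; exact hα j
  set M : ℝ := ∑ j, α j with hM
  have hMpos : 0 < M := Finset.sum_pos (fun j _ => hα j) Finset.univ_nonempty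
  have hαM : ∀ i, α i ≤ M := fun i =>
    Finset.single_le_sum (fun j _ => (hα j).le) (Finset.mem_univ i)
  set c : ℝ := m * ((A : ℝ)⁻¹) ^ β with hc
  have hApos' : (0:ℝ) < (A : ℝ) := by exact_mod_cast hApos
  have hcpos : 0 < c :=
    mul_pos hmpos (Real.rpow_pos_of_pos (inv_pos.mpr hApos') β)
  -- coordinates of simplex points are in [0,1]
  have hcoord : ∀ x ∈ simplexE A, ∀ i, x i ∈ Set.Icc (0:ℝ) 1 := by
    intro x hx i
    refine ⟨hx.1 i, ?_⟩
    have := Finset.single_le_sum (f := fun j => x j) (fun j _ => hx.1 j)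
      (Finset.mem_univ i)
    rw [hx.2] at this; exact this
  -- denominator bounds
  have hDle : ∀ x ∈ simplexE A, (∑ j, α j * x j ^ β) ≤ M := by
    intro x hx
    rw [hM]
    apply Finset.sum_le_sum
    intro j _
    have h1 : x j ^ β ≤ 1 :=
      Real.rpow_le_one (hcoord x hx j).1 (hcoord x hx j).2 (by linarith)
    nlinarith [hα j, (hα j).le, Real.rpow_nonneg (hcoord x hx j).1 β]
  have hDge : ∀ x ∈ simplexE A, c ≤ ∑ j, α j * x j ^ β := by
    intro x hx
    -- some coordinate is at least 1/A
    have hex : ∃ j, (A:ℝ)⁻¹ ≤ x j := by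
      by_contra h
      push_neg at h
      have : (∑ j, x j) < ∑ j : Fin A, (A:ℝ)⁻¹ :=
        Finset.sum_lt_sum_of_nonempty Finset.univ_nonempty fun j _ => h j
      rw [hx.2] at this
      simp only [Finset.sum_const, Finset.card_univ, Fintype.card_fin, nsmul_eq_mul] at this
      rw [mul_inv_cancel₀ (ne_of_gt hApos')] at this
      exact lt_irrefl _ this
    obtain ⟨j, hj⟩ := hex
    have h1 : c ≤ α j * x j ^ β := by
      rw [hc]
      apply mul_le_mul
      · exact Finset.inf'_le α (Finset.mem_univ j)
      · exact Real.rpow_le_rpow (by positivity) hj (by linarith)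
      · positivity
      · exact (hα j).le
    refine le_trans h1 ?_
    exact Finset.single_le_sum
      (fun k _ => mul_nonneg (hα k).le (Real.rpow_nonneg (hcoord x hx k).1 β))
      (Finset.mem_univ j)
  -- numerator bounds and Lipschitz bounds
  set L : ℝ := 2 * β * M ^ 2 / c ^ 2 with hL
  -- componentwise Lipschitz bound for pField
  have hcomp : ∀ x ∈ simplexE A, ∀ y ∈ simplexE A, ∀ i,
      |pField A α β x i - pField A α β y i| ≤ L * ‖x - y‖ := by
    intro x hx y hy i
    set Dx := ∑ j, α j * x j ^ β with hDx
    set Dy := ∑ j, α j * y j ^ β with hDy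
    have hDxc : c ≤ Dx := hDge x hx
    have hDyc : c ≤ Dy := hDge y hy
    have hDxM : Dx ≤ M := hDle x hx
    have hDyM : Dy ≤ M := hDle y hy
    have hDxpos : 0 < Dx := lt_of_lt_of_le hcpos hDxc
    have hDypos : 0 < Dy := lt_of_lt_of_le hcpos hDyc
    have hNx : α i * x i ^ β ≤ M := by
      have h1 : x i ^ β ≤ 1 :=
        Real.rpow_le_one (hcoord x hx i).1 (hcoord x hx i).2 (by linarith)
      calc α i * x i ^ β ≤ α i * 1 := by nlinarith [hα i]
        _ = α i := mul_one _
        _ ≤ M := hαM i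
    have hNy : α i * y i ^ β ≤ M := by
      have h1 : y i ^ β ≤ 1 :=
        Real.rpow_le_one (hcoord y hy i).1 (hcoord y hy i).2 (by linarith)
      calc α i * y i ^ β ≤ α i * 1 := by nlinarith [hα i]
        _ = α i := mul_one _
        _ ≤ M := hαM i
    have hNxnn : 0 ≤ α i * x i ^ β :=
      mul_nonneg (hα i).le (Real.rpow_nonneg (hcoord x hx i).1 β)
    have hNynn : 0 ≤ α i * y i ^ β :=
      mul_nonneg (hα i).le (Real.rpow_nonneg (hcoord y hy i).1 β)
    -- numerator Lipschitz
    have hNlip : |α i * x i ^ β - α i * y i ^ β| ≤ β * M * ‖x - y‖ := by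
      rw [← mul_sub, abs_mul, abs_of_nonneg (hα i).le]
      have h1 : |x i ^ β - y i ^ β| ≤ β * |x i - y i| :=
        rpow_lip_aux hβ (hcoord x hx i) (hcoord y hy i)
      have h2 : |x i - y i| ≤ ‖x - y‖ := by
        have := coord_le_norm (x - y) i
        simpa using this
      calc α i * |x i ^ β - y i ^ β| ≤ M * (β * ‖x - y‖) := by
            apply mul_le_mul (hαM i) (le_trans h1 (by nlinarith [abs_nonneg (x i - y i)]))
              (abs_nonneg _) hMpos.le
        _ = β * M * ‖x - y‖ := by ring
    -- denominator Lipschitz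
    have hDlip : |Dx - Dy| ≤ β * M * ‖x - y‖ := by
      rw [hDx, hDy, ← Finset.sum_sub_distrib]
      refine le_trans (Finset.abs_sum_le_sum_abs _ _) ?_
      have : ∀ j ∈ Finset.univ, |α j * x j ^ β - α j * y j ^ β| ≤ β * α j * ‖x - y‖ := by
        intro j _
        rw [← mul_sub, abs_mul, abs_of_nonneg (hα j).le]
        have h1 : |x j ^ β - y j ^ β| ≤ β * |x j - y j| :=
          rpow_lip_aux hβ (hcoord x hx j) (hcoord y hy j)
        have h2 : |x j - y j| ≤ ‖x - y‖ := by
          have := coord_le_norm (x - y) j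
          simpa using this
        calc α j * |x j ^ β - y j ^ β| ≤ α j * (β * ‖x - y‖) := by
              apply mul_le_mul_of_nonneg_left _ (hα j).le
              exact le_trans h1 (by nlinarith [abs_nonneg (x j - y j)])
          _ = β * α j * ‖x - y‖ := by ring
      refine le_trans (Finset.sum_le_sum this) ?_
      rw [← Finset.sum_mul, ← Finset.mul_sum, ← hM]
    -- quotient bound
    have key : pField A α β x i - pField A α β y i =
        ((α i * x i ^ β - α i * y i ^ β) * Dy + (α i * y i ^ β) * (Dy - Dx)) / (Dx * Dy) := by
      simp only [pField, WithLp.ofLp_toLp, ← hDx, ← hDy]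
      field_simp
      ring
    rw [key, abs_div, abs_of_pos (mul_pos hDxpos hDypos)]
    rw [div_le_iff₀ (mul_pos hDxpos hDypos)]
    have hnum : |(α i * x i ^ β - α i * y i ^ β) * Dy + (α i * y i ^ β) * (Dy - Dx)|
        ≤ β * M * ‖x - y‖ * M + M * (β * M * ‖x - y‖) := by
      refine le_trans (abs_add_le _ _) ?_
      gcongr
      · rw [abs_mul, abs_of_pos hDypos]
        apply mul_le_mul hNlip hDyM hDypos.le (by positivity)
      · rw [abs_mul, abs_of_nonneg hNynn, abs_sub_comm]
        exact mul_le_mul hNy hDlip (abs_nonneg _) hMpos.le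
    refine le_trans hnum ?_
    have hcc : c * c ≤ Dx * Dy := mul_le_mul hDxc hDyc hcpos.le hDxpos.le
    have : β * M * ‖x - y‖ * M + M * (β * M * ‖x - y‖) = 2 * β * M ^ 2 * ‖x - y‖ := by ring
    rw [this, hL]
    rw [div_mul_eq_mul_div, div_mul_eq_mul_div, le_div_iff₀ (by positivity)]
    have hnn : 0 ≤ 2 * β * M ^ 2 * ‖x - y‖ := by positivity
    calc 2 * β * M ^ 2 * ‖x - y‖ * (c ^ 2) = 2 * β * M ^ 2 * ‖x - y‖ * (c * c) := by ring
      _ ≤ 2 * β * M ^ 2 * ‖x - y‖ * (Dx * Dy) := by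
          exact mul_le_mul_of_nonneg_left hcc hnn
  -- assemble: Euclidean norm of p x - p y
  refine ⟨Real.sqrt A * L + 1, ?_⟩
  intro x hx y hy
  have hLnn : 0 ≤ L := by positivity
  have hp : ‖pField A α β x - pField A α β y‖ ≤ Real.sqrt A * L * ‖x - y‖ := by
    rw [EuclideanSpace.norm_eq]
    have hbd : (∑ i, ‖(pField A α β x - pField A α β y) i‖ ^ 2)
        ≤ ∑ i : Fin A, (L * ‖x - y‖) ^ 2 := by
      apply Finset.sum_le_sum
      intro i _
      have h1 : ‖(pField A α β x - pField A α β y) i‖ = |pField A α β x i - pField A α β y i| := by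
        simp [Real.norm_eq_abs]
      rw [h1]
      exact pow_le_pow_left₀ (abs_nonneg _) (hcomp x hx y hy i) 2
    refine le_trans (Real.sqrt_le_sqrt hbd) (le_of_eq ?_)
    rw [Finset.sum_const, Finset.card_univ, Fintype.card_fin, nsmul_eq_mul,
      Real.sqrt_mul (by positivity), Real.sqrt_sq (by positivity)]
    ring
  have hG : G0Field A α β x - G0Field A α β y
      = (pField A α β x - pField A α β y) - (x - y) := by
    simp only [G0Field]; abel
  rw [hG]
  calc ‖(pField A α β x - pField A α β y) - (x - y)‖
      ≤ ‖pField A α β x - pField A α β y‖ + ‖x - y‖ := norm_sub_le _ _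
    _ ≤ Real.sqrt A * L * ‖x - y‖ + 1 * ‖x - y‖ := by rw [one_mul]; exact add_le_add hp le_rfl
    _ = (Real.sqrt A * L + 1) * ‖x - y‖ := by ring
end

section
/- Assume β ≥ 1. Then there exists a critical labor share r_c ∈ (0,1) such that for every r ∈ [r_c, 1) the drift field G(x) = (1−r)p(x) + rγ − x has exactly one zero in the closed simplex Δ. -/
/-!
For `r` close to `1` the map `x ↦ (1 - r) p(x) + r γ` sends the simplex into itself (a convex
combination of two points of it) and is a contraction. Indeed `p` is Lipschitz on the simplex:
`t ↦ t ^ β` is `β`-Lipschitz on `[0, 1]` when `β ≥ 1`, and the denominator `∑ α_j x_j ^ β` is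
continuous and positive on the compact simplex, hence bounded below there by some `c > 0`.
The zeros of `G` in the simplex are the fixed points of this map, so Banach's fixed point theorem
gives exactly one.
-/

open scoped BigOperators

/-- The closed simplex in `ℝ^A`. -/
def simplexF (A : ℕ) : Set (Fin A → ℝ) :=
  {x | (∀ i, 0 ≤ x i) ∧ ∑ i, x i = 1}

open Set Finset
open scoped NNReal

theorem LipschitzOnWith.existsUnique_fixedPoint {X : Type*} [MetricSpace X] {f : X → X}
    {s : Set X} {K : ℝ≥0} (hf : LipschitzOnWith K f s) (hK : K < 1) (hsc : IsComplete s)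
    (hsf : MapsTo f s s) (hs : s.Nonempty) :
    ∃! x, x ∈ s ∧ f x = x := by
  have hc : ContractingWith K (hsf.restrict f s s) := ⟨hK, hf.mapsToRestrict hsf⟩
  obtain ⟨x, hxs⟩ := hs
  obtain ⟨y, hys, hy, -⟩ := hc.exists_fixedPoint' hsc hsf hxs (edist_ne_top x (f x))
  refine ⟨y, ⟨hys, hy⟩, fun z ⟨hzs, hz⟩ => ?_⟩
  exact congrArg Subtype.val
    (hc.fixedPoint_unique' (x := ⟨z, hzs⟩) (y := ⟨y, hys⟩) (Subtype.ext hz) (Subtype.ext hy))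

theorem abs_rpow_sub_rpow_le {β a b : ℝ} (hβ : 1 ≤ β) (ha : a ∈ Icc (0 : ℝ) 1)
    (hb : b ∈ Icc (0 : ℝ) 1) : |a ^ β - b ^ β| ≤ β * |a - b| := by
  have hderiv : ∀ t ∈ Icc (0 : ℝ) 1,
      HasDerivWithinAt (· ^ β) (β * t ^ (β - 1)) (Icc 0 1) t := fun t _ =>
    (Real.hasDerivAt_rpow_const (Or.inr hβ)).hasDerivWithinAt
  have hbound : ∀ t ∈ Icc (0 : ℝ) 1, ‖β * t ^ (β - 1)‖ ≤ β := fun t ht => by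
    have h0 : 0 ≤ t ^ (β - 1) := Real.rpow_nonneg ht.1 _
    have h1 : t ^ (β - 1) ≤ 1 := Real.rpow_le_one ht.1 ht.2 (by linarith)
    rw [Real.norm_eq_abs, abs_of_nonneg (by positivity)]
    nlinarith
  simpa only [Real.norm_eq_abs] using
    (convex_Icc (0 : ℝ) 1).norm_image_sub_le_of_norm_hasDerivWithin_le hderiv hbound hb ha

theorem abs_div_sub_div_le {n₁ n₂ s₁ s₂ : ℝ} (hs₁ : 0 < s₁) (hs₂ : 0 < s₂) (hn₂ : 0 ≤ n₂)
    (hn₂s₂ : n₂ ≤ s₂) : |n₁ / s₁ - n₂ / s₂| ≤ (|n₁ - n₂| + |s₁ - s₂|) / s₁ := by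
  have hq : |n₂ / s₂| ≤ 1 := by rw [abs_of_nonneg (by positivity)]; exact (div_le_one hs₂).2 hn₂s₂
  have key : n₁ / s₁ - n₂ / s₂ = ((n₁ - n₂) - n₂ / s₂ * (s₁ - s₂)) / s₁ := by
    field_simp
    ring
  rw [key, abs_div, abs_of_pos hs₁]
  gcongr
  calc |n₁ - n₂ - n₂ / s₂ * (s₁ - s₂)| ≤ |n₁ - n₂| + |n₂ / s₂| * |s₁ - s₂| := by
        rw [← abs_mul]
        exact abs_sub _ _
    _ ≤ |n₁ - n₂| + |s₁ - s₂| := by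
        gcongr
        exact mul_le_of_le_one_left (abs_nonneg _) hq

section WeightedPowerSum

variable {ι : Type*} [Fintype ι] {α : ι → ℝ} {β : ℝ} {x y : ι → ℝ}

theorem sum_mul_rpow_pos (hα : ∀ i, 0 < α i) (hx : x ∈ stdSimplex ℝ ι) :
    0 < ∑ j, α j * x j ^ β := by
  obtain ⟨j, -, hj⟩ := exists_lt_of_sum_lt (s := Finset.univ) (f := 0) (g := x) (by simp [hx.2])
  exact sum_pos' (fun i _ => mul_nonneg (hα i).le (Real.rpow_nonneg (hx.1 i) β))
    ⟨j, mem_univ j, mul_pos (hα j) (Real.rpow_pos_of_pos hj β)⟩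

theorem exists_pos_le_sum_mul_rpow (hα : ∀ i, 0 < α i) (hβ : 0 ≤ β) :
    ∃ c > 0, ∀ x ∈ stdSimplex ℝ ι, c ≤ ∑ j, α j * x j ^ β := by
  rcases (stdSimplex ℝ ι).eq_empty_or_nonempty with h | hne
  · exact ⟨1, one_pos, by simp [h]⟩
  have hcont : Continuous fun x : ι → ℝ => ∑ j, α j * x j ^ β :=
    continuous_finsetSum _ fun j _ =>
      continuous_const.mul ((Real.continuous_rpow_const hβ).comp (continuous_apply j))
  obtain ⟨x₀, hx₀, hmin⟩ := (isCompact_stdSimplex ℝ ι).exists_isMinOn hne hcont.continuousOn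
  exact ⟨_, sum_mul_rpow_pos hα hx₀, fun x hx => hmin hx⟩

theorem abs_mul_rpow_sub_le (hα : ∀ i, 0 ≤ α i) (hβ : 1 ≤ β) (hx : x ∈ stdSimplex ℝ ι)
    (hy : y ∈ stdSimplex ℝ ι) (i : ι) :
    |α i * x i ^ β - α i * y i ^ β| ≤ α i * β * dist x y := by
  rw [← mul_sub, abs_mul, abs_of_nonneg (hα i), mul_assoc]
  refine mul_le_mul_of_nonneg_left ?_ (hα i)
  calc |x i ^ β - y i ^ β| ≤ β * |x i - y i| :=
        abs_rpow_sub_rpow_le hβ (mem_Icc_of_mem_stdSimplex hx i) (mem_Icc_of_mem_stdSimplex hy i)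
    _ ≤ β * dist x y := by
        gcongr
        exact Real.dist_eq (x i) (y i) ▸ dist_le_pi_dist x y i

theorem abs_sum_mul_rpow_sub_le (hα : ∀ i, 0 ≤ α i) (hβ : 1 ≤ β) (hx : x ∈ stdSimplex ℝ ι)
    (hy : y ∈ stdSimplex ℝ ι) :
    |∑ j, α j * x j ^ β - ∑ j, α j * y j ^ β| ≤ (∑ j, α j) * β * dist x y := by
  rw [← sum_sub_distrib, sum_mul, sum_mul]
  exact (abs_sum_le_sum_abs _ _).trans
    (sum_le_sum fun j _ => abs_mul_rpow_sub_le hα hβ hx hy j)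

end WeightedPowerSum

theorem LipschitzOnWith.smul_add_const {X 𝕜 E : Type*} [PseudoMetricSpace X] [NormedField 𝕜]
    [SeminormedAddCommGroup E] [NormedSpace 𝕜 E] {f : X → E} {s : Set X} {K : ℝ≥0}
    (hf : LipschitzOnWith K f s) (t : 𝕜) (c : E) :
    LipschitzOnWith (‖t‖₊ * K) (fun x => t • f x + c) s :=
  LipschitzOnWith.of_dist_le_mul fun x hx y hy => by
    rw [dist_add_right, dist_smul₀, NNReal.coe_mul, coe_nnnorm, mul_assoc]
    gcongr
    exact hf.dist_le_mul x hx y hy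

-- `simplexF A` is definitionally `stdSimplex ℝ (Fin A)`, and is used as such below.
section Drift

variable {A : ℕ} {α : Fin A → ℝ} {β r : ℝ} {γ x : Fin A → ℝ}

theorem pF_mem_simplexF (hα : ∀ i, 0 < α i) (hx : x ∈ simplexF A) : pF A α β x ∈ simplexF A := by
  have hS := sum_mul_rpow_pos (β := β) hα hx
  refine ⟨fun i => div_nonneg (mul_nonneg (hα i).le (Real.rpow_nonneg (hx.1 i) β)) hS.le, ?_⟩
  simp only [pF, ← sum_div, div_self hS.ne']

theorem exists_lipschitzOnWith_pF (hα : ∀ i, 0 < α i) (hβ : 1 ≤ β) :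
    ∃ K : ℝ≥0, LipschitzOnWith K (pF A α β) (simplexF A) := by
  have hβ₀ : 0 ≤ β := zero_le_one.trans hβ
  obtain ⟨c, hc, hcS⟩ := exists_pos_le_sum_mul_rpow hα hβ₀
  set T := ∑ j, α j
  have hT : 0 ≤ T := sum_nonneg fun j _ => (hα j).le
  refine ⟨⟨2 * T * β / c, by positivity⟩, LipschitzOnWith.of_dist_le_mul fun x hx y hy => ?_⟩
  refine (dist_pi_le_iff (mul_nonneg (NNReal.coe_nonneg _) dist_nonneg)).2 fun i => ?_
  have hSx := sum_mul_rpow_pos (β := β) hα hx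
  have hSy := sum_mul_rpow_pos (β := β) hα hy
  have hαT : α i ≤ T := single_le_sum (fun j _ => (hα j).le) (mem_univ i)
  have hN := abs_mul_rpow_sub_le (fun j => (hα j).le) hβ hx hy i
  have hS := abs_sum_mul_rpow_sub_le (fun j => (hα j).le) hβ hx hy
  rw [Real.dist_eq]
  change _ ≤ 2 * T * β / c * dist x y
  calc |pF A α β x i - pF A α β y i|
      ≤ (|α i * x i ^ β - α i * y i ^ β| + |∑ j, α j * x j ^ β - ∑ j, α j * y j ^ β|) /
          ∑ j, α j * x j ^ β :=
        abs_div_sub_div_le hSx hSy (mul_nonneg (hα i).le (Real.rpow_nonneg (hy.1 i) β))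
          (single_le_sum (f := fun j => α j * y j ^ β)
            (fun j _ => mul_nonneg (hα j).le (Real.rpow_nonneg (hy.1 j) β)) (mem_univ i))
    _ ≤ (T * β * dist x y + T * β * dist x y) / c := by
        gcongr
        · exact hN.trans (by gcongr)
        · exact hcS x hx
    _ = 2 * T * β / c * dist x y := by ring

theorem GF_eq_zero_iff : GF A α β r γ x = 0 ↔ (1 - r) • pF A α β x + r • γ = x := by
  simp only [funext_iff, GF, Pi.zero_apply, sub_eq_zero, Pi.add_apply, Pi.smul_apply,
    smul_eq_mul]

end Drift

theorem exists_critical_labor_share_unique_zero_general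
    (A : ℕ) (α : Fin A → ℝ) (hα : ∀ i, 0 < α i)
    (β : ℝ) (hβ : 1 ≤ β)
    (γ : Fin A → ℝ) (hγ : γ ∈ simplexF A) :
    ∃ rc : ℝ, 0 < rc ∧ rc < 1 ∧
      ∀ r : ℝ, rc ≤ r → r < 1 →
        ∃! x : Fin A → ℝ, x ∈ simplexF A ∧ GF A α β r γ x = 0 := by
  obtain ⟨K, hK⟩ := exists_lipschitzOnWith_pF (A := A) hα hβ
  have hε : 1 / ((K : ℝ) + 2) < 1 := (div_lt_one (by positivity)).2 (by linarith [K.2])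
  refine ⟨1 - 1 / (K + 2), by linarith, by linarith [show 0 < 1 / ((K : ℝ) + 2) by positivity],
    fun r hr hr1 => ?_⟩
  have hr0 : 0 ≤ r := by linarith
  have hcontr : ‖1 - r‖₊ * K < 1 := by
    rw [← NNReal.coe_lt_coe, NNReal.coe_mul, coe_nnnorm, Real.norm_of_nonneg (by linarith),
      NNReal.coe_one]
    calc (1 - r) * K ≤ 1 / (K + 2) * K := by gcongr; linarith
      _ < 1 := by rw [div_mul_eq_mul_div, one_mul, div_lt_one (by positivity)]; linarith
  simp_rw [GF_eq_zero_iff]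
  exact (hK.smul_add_const (1 - r) (r • γ)).existsUnique_fixedPoint hcontr
    (isClosed_stdSimplex ℝ _).isComplete
    (fun x hx => convex_stdSimplex ℝ _ (pF_mem_simplexF hα hx) hγ (by linarith) hr0 (by ring))
    ⟨γ, hγ⟩

/-- for `β ≥ 1` there is a critical labor share `r_c ∈ (0,1)` such
that for every `r ∈ [r_c, 1)` the drift field `G(x) = (1-r)p(x) + rγ - x` has
exactly one zero in the closed simplex. -/
theorem exists_critical_labor_share_unique_zero
    (A : ℕ) (hA : 2 ≤ A) (α : Fin A → ℝ) (hα : ∀ i, 0 < α i)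
    (β : ℝ) (hβ : 1 ≤ β)
    (γ : Fin A → ℝ) (hγ : γ ∈ simplexF A) :
    ∃ rc : ℝ, 0 < rc ∧ rc < 1 ∧
      ∀ r : ℝ, rc ≤ r → r < 1 →
        ∃! x : Fin A → ℝ, x ∈ simplexF A ∧ GF A α β r γ x = 0 :=
  exists_critical_labor_share_unique_zero_general A α hα β hβ γ hγ
end

section
/- Two-agent symmetric case with quadratic feedback: let β = 2, α_1 = α_2 = 1, γ = 1/2 and r ∈ (0,1), and let g(x) = (1−r)(x²/(x²+(1−x)²) − x) + r(1/2 − x) for x ∈ (0,1). If r ≥ 1/2, then x = 1/2 is the unique zero of g in (0,1). If r < 1/2, then the zeros of g in (0,1) are exactly the three points 1/2, 1/2 + (1/2)√(1−2r) and 1/2 − (1/2)√(1−2r). -/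
/-! Clearing the positive denominator `x² + (1 - x)²`, the numerator of the drift factors as
`-2 (x - 1/2) ((x - 1/2)² - (1 - 2r)/4)`. So besides the symmetric point `x = 1/2` the zeros are
those of the quadratic factor, which are real and distinct from `1/2` exactly when `r < 1/2`. -/

noncomputable def symmetricQuadraticDrift (r x : ℝ) : ℝ :=
  (1 - r) * (x ^ 2 / (x ^ 2 + (1 - x) ^ 2) - x) + r * (1 / 2 - x)

lemma sq_add_one_sub_sq_pos (x : ℝ) : 0 < x ^ 2 + (1 - x) ^ 2 := by
  nlinarith [sq_nonneg (x - 1 / 2)]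

lemma symmetricQuadraticDrift_eq (r x : ℝ) :
    symmetricQuadraticDrift r x =
      -2 * (x - 1 / 2) * ((x - 1 / 2) ^ 2 - (1 - 2 * r) / 4) / (x ^ 2 + (1 - x) ^ 2) := by
  have := (sq_add_one_sub_sq_pos x).ne'
  rw [symmetricQuadraticDrift]
  field_simp
  ring

lemma symmetricQuadraticDrift_eq_zero_iff (r x : ℝ) :
    symmetricQuadraticDrift r x = 0 ↔ x = 1 / 2 ∨ (x - 1 / 2) ^ 2 = (1 - 2 * r) / 4 := by
  rw [symmetricQuadraticDrift_eq, div_eq_zero_iff, or_iff_left (sq_add_one_sub_sq_pos x).ne',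
    mul_eq_zero, mul_eq_zero, sub_eq_zero, sub_eq_zero]
  norm_num

lemma eq_half_of_sq_sub_half_eq {r x : ℝ} (hr : 1 / 2 ≤ r)
    (h : (x - 1 / 2) ^ 2 = (1 - 2 * r) / 4) : x = 1 / 2 := by
  have : (x - 1 / 2) ^ 2 = 0 := le_antisymm (by linarith) (sq_nonneg _)
  linarith [pow_eq_zero_iff two_ne_zero |>.mp this]

lemma sq_sub_half_eq_iff {r x : ℝ} (hr : r ≤ 1 / 2) :
    (x - 1 / 2) ^ 2 = (1 - 2 * r) / 4 ↔
      x = 1 / 2 + 1 / 2 * Real.sqrt (1 - 2 * r) ∨ x = 1 / 2 - 1 / 2 * Real.sqrt (1 - 2 * r) := by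
  have hroot : (1 - 2 * r) / 4 = (1 / 2 * Real.sqrt (1 - 2 * r)) ^ 2 := by
    rw [mul_pow, Real.sq_sqrt (by linarith)]
    ring
  rw [hroot, sq_eq_sq_iff_eq_or_eq_neg, sub_eq_iff_eq_add', sub_eq_iff_eq_add', ← sub_eq_add_neg]

theorem two_agent_quadratic_symmetric_fixed_points_general
    (r : ℝ)
    (g : ℝ → ℝ)
    (hg : ∀ x : ℝ, g x = (1 - r) * (x ^ 2 / (x ^ 2 + (1 - x) ^ 2) - x)
      + r * (1 / 2 - x)) :
    ((1 / 2 : ℝ) ≤ r → ∀ x : ℝ, 0 < x → x < 1 → (g x = 0 ↔ x = 1 / 2)) ∧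
    (r < 1 / 2 → ∀ x : ℝ, 0 < x → x < 1 →
      (g x = 0 ↔ x = 1 / 2 ∨ x = 1 / 2 + (1 / 2) * Real.sqrt (1 - 2 * r)
        ∨ x = 1 / 2 - (1 / 2) * Real.sqrt (1 - 2 * r))) := by
  obtain rfl : g = symmetricQuadraticDrift r := funext hg
  refine ⟨fun hr x _ _ => ?_, fun hr x _ _ => ?_⟩
  · rw [symmetricQuadraticDrift_eq_zero_iff, or_iff_left_of_imp (eq_half_of_sq_sub_half_eq hr)]
  · rw [symmetricQuadraticDrift_eq_zero_iff, sq_sub_half_eq_iff hr.le]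

/-- in the two-agent symmetric model with quadratic feedback
(`β = 2`, `α₁ = α₂ = 1`, `γ = 1/2`) and labor share `r ∈ (0,1)`, the drift
`g(x) = (1-r)(x²/(x²+(1-x)²) - x) + r(1/2 - x)` has `x = 1/2` as its unique zero
in `(0,1)` when `r ≥ 1/2`, and exactly the three zeros
`1/2`, `1/2 + (1/2)√(1-2r)`, `1/2 - (1/2)√(1-2r)` in `(0,1)` when `r < 1/2`. -/
theorem two_agent_quadratic_symmetric_fixed_points
    (r : ℝ) (hr0 : 0 < r) (hr1 : r < 1)
    (g : ℝ → ℝ)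
    (hg : ∀ x : ℝ, g x = (1 - r) * (x ^ 2 / (x ^ 2 + (1 - x) ^ 2) - x)
      + r * (1 / 2 - x)) :
    ((1 / 2 : ℝ) ≤ r → ∀ x : ℝ, 0 < x → x < 1 → (g x = 0 ↔ x = 1 / 2)) ∧
    (r < 1 / 2 → ∀ x : ℝ, 0 < x → x < 1 →
      (g x = 0 ↔ x = 1 / 2 ∨ x = 1 / 2 + (1 / 2) * Real.sqrt (1 - 2 * r)
        ∨ x = 1 / 2 - (1 / 2) * Real.sqrt (1 - 2 * r))) :=
  two_agent_quadratic_symmetric_fixed_points_general r g hg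
end

section
/- Two-agent symmetric case: let α_1 = α_2 = 1, γ = 1/2, β ∈ ℝ and r ∈ [0,1], and let g(x) = (1−r)(p(x) − x) + r(1/2 − x) with p(x) = x^β/(x^β+(1−x)^β). Then g is differentiable at x = 1/2 with g'(1/2) = (1−r)(β−1) − r. In particular, for β > 1 one has g'(1/2) ≤ 0 if and only if r ≥ (β−1)/β. -/
/-- in the two-agent symmetric model (`α₁ = α₂ = 1`, `γ = 1/2`),
with `p(x) = x^β/(x^β + (1-x)^β)` (real powers) and
`g(x) = (1-r)(p(x) - x) + r(1/2 - x)`, the function `g` is differentiable at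
`x = 1/2` with `g'(1/2) = (1-r)(β-1) - r`; in particular, for `β > 1`,
`g'(1/2) ≤ 0` iff `r ≥ (β-1)/β`. -/
theorem two_agent_symmetric_derivative_at_half
    (β r : ℝ) (hr0 : 0 ≤ r) (hr1 : r ≤ 1)
    (p g : ℝ → ℝ)
    (hp : ∀ x : ℝ, p x = x ^ β / (x ^ β + (1 - x) ^ β))
    (hg : ∀ x : ℝ, g x = (1 - r) * (p x - x) + r * (1 / 2 - x)) :
    HasDerivAt g ((1 - r) * (β - 1) - r) (1 / 2) ∧
    (1 < β → ((1 - r) * (β - 1) - r ≤ 0 ↔ (β - 1) / β ≤ r)) := by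
  have hiff : 1 < β → ((1 - r) * (β - 1) - r ≤ 0 ↔ (β - 1) / β ≤ r) := by
    intro hβ
    rw [div_le_iff₀ (by linarith)]
    constructor <;> intro h <;> nlinarith
  refine ⟨?_, hiff⟩
  have hgfun : g = fun x => (1 - r) * (x ^ β / (x ^ β + (1 - x) ^ β) - x) + r * (1 / 2 - x) := by
    funext x; rw [hg, hp]
  rw [hgfun]
  set a : ℝ := (1 / 2 : ℝ) ^ β with ha
  have hapos : 0 < a := Real.rpow_pos_of_pos (by norm_num) β
  have hb : ((1 : ℝ) / 2) ^ (β - 1) = 2 * a := by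
    rw [Real.rpow_sub (by norm_num : (0:ℝ) < 1/2), Real.rpow_one, ha]; ring
  have hu : HasDerivAt (fun x : ℝ => x ^ β) (β * (2 * a)) (1 / 2) := by
    have h := Real.hasDerivAt_rpow_const (p := β) (x := (1/2 : ℝ)) (Or.inl (by norm_num))
    rwa [hb] at h
  have hv : HasDerivAt (fun x : ℝ => (1 - x) ^ β) (-(β * (2 * a))) (1 / 2) := by
    have h1 : HasDerivAt (fun x : ℝ => 1 - x) (-1) (1 / 2) := (hasDerivAt_id _).const_sub 1
    have h := h1.rpow_const (p := β) (Or.inl (by norm_num))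
    convert h using 1
    norm_num [hb]
  have hs : HasDerivAt (fun x : ℝ => x ^ β + (1 - x) ^ β) 0 (1 / 2) := by
    have := hu.fun_add hv
    simpa using this
  have hne : (1 / 2 : ℝ) ^ β + (1 - 1 / 2 : ℝ) ^ β ≠ 0 := by
    norm_num
    positivity
  have hpd : HasDerivAt (fun x : ℝ => x ^ β / (x ^ β + (1 - x) ^ β)) β (1 / 2) := by
    have h := hu.fun_div hs hne
    refine h.congr_deriv ?_
    have h12 : ((1:ℝ) - 1 / 2) = 1 / 2 := by norm_num
    rw [h12, ← ha]
    field_simp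
    ring
  have hfinal := ((hpd.fun_sub (hasDerivAt_id (1/2 : ℝ))).const_mul (1 - r)).fun_add
    (((hasDerivAt_id (1/2 : ℝ)).const_sub (1/2)).const_mul r)
  refine hfinal.congr_deriv ?_
  ring
end

section
/- Assume β ≤ 1, β ≠ 0 and r ∈ [0,1); if β = 1, assume additionally r > 0 and γ_i > 0 for all i. Then the Hessian of the Lyapunov function L is positive definite at every point of (0,∞)^A; hence L is strictly convex on (0,∞)^A, and consequently the drift field G has at most one zero in the open orthant (0,∞)^A, in particular at most one zero in the relative interior Δ° of the simplex. -/
open scoped BigOperators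

/-- The positive open orthant in `ℝ^A`. -/
def posOrthant (A : ℕ) : Set (Fin A → ℝ) := {x | ∀ i, 0 < x i}

namespace LyapAux

variable {A : ℕ}

noncomputable def S0 (A : ℕ) (α : Fin A → ℝ) (β : ℝ) (x v : Fin A → ℝ) (t : ℝ) : ℝ :=
  ∑ j, α j * (x j + t * v j) ^ β

noncomputable def S1 (A : ℕ) (α : Fin A → ℝ) (β : ℝ) (x v : Fin A → ℝ) (t : ℝ) : ℝ :=
  ∑ j, α j * (x j + t * v j) ^ (β - 1) * v j

noncomputable def S2 (A : ℕ) (α : Fin A → ℝ) (β : ℝ) (x v : Fin A → ℝ) (t : ℝ) : ℝ :=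
  ∑ j, α j * (x j + t * v j) ^ (β - 2) * v j ^ 2

noncomputable def g1 (A : ℕ) (α : Fin A → ℝ) (β r : ℝ) (γ : Fin A → ℝ) (x v : Fin A → ℝ)
    (t : ℝ) : ℝ :=
  -(1 - r) * (S1 A α β x v t / S0 A α β x v t)
    - r * ∑ i, γ i * (v i / (x i + t * v i)) + ∑ i, v i

noncomputable def g2 (A : ℕ) (α : Fin A → ℝ) (β r : ℝ) (γ : Fin A → ℝ) (x v : Fin A → ℝ)
    (t : ℝ) : ℝ :=
  (1 - r) * (((1 - β) * S2 A α β x v t * S0 A α β x v t + β * (S1 A α β x v t) ^ 2)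
      / (S0 A α β x v t) ^ 2)
    + r * ∑ i, γ i * (v i ^ 2 / (x i + t * v i) ^ 2)

lemma hasDerivAt_affine (x v : ℝ) (t : ℝ) : HasDerivAt (fun s : ℝ => x + s * v) v t := by
  simpa using ((hasDerivAt_id t).mul_const v).const_add x

lemma S0_pos (hA : 0 < A) (α : Fin A → ℝ) (hα : ∀ i, 0 < α i) (β : ℝ) (x v : Fin A → ℝ)
    (t : ℝ) (hu : ∀ i, 0 < x i + t * v i) : 0 < S0 A α β x v t := by
  have : Nonempty (Fin A) := ⟨⟨0, hA⟩⟩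
  exact Finset.sum_pos (fun j _ => mul_pos (hα j) (Real.rpow_pos_of_pos (hu j) β))
    Finset.univ_nonempty

lemma hasDerivAt_sumpow (α : Fin A → ℝ) (x v : Fin A → ℝ) (t : ℝ) (p : ℝ)
    (hu : ∀ i, 0 < x i + t * v i) :
    HasDerivAt (fun s => ∑ j, α j * (x j + s * v j) ^ p)
      (∑ j, α j * (v j * p * (x j + t * v j) ^ (p - 1))) t := by
  apply HasDerivAt.fun_sum
  intro j _
  exact ((hasDerivAt_affine (x j) (v j) t).rpow_const (Or.inl (hu j).ne')).const_mul (α j)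

lemma hasDerivAt_S0 (α : Fin A → ℝ) (β : ℝ) (x v : Fin A → ℝ) (t : ℝ)
    (hu : ∀ i, 0 < x i + t * v i) :
    HasDerivAt (S0 A α β x v) (β * S1 A α β x v t) t := by
  have h := hasDerivAt_sumpow α x v t β hu
  convert h using 1
  · rfl
  rw [S1, Finset.mul_sum]
  exact Finset.sum_congr rfl fun j _ => by ring

lemma hasDerivAt_S1 (α : Fin A → ℝ) (β : ℝ) (x v : Fin A → ℝ) (t : ℝ)
    (hu : ∀ i, 0 < x i + t * v i) :
    HasDerivAt (S1 A α β x v) ((β - 1) * S2 A α β x v t) t := by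
  have h : HasDerivAt (S1 A α β x v)
      (∑ j, α j * (v j * (β - 1) * (x j + t * v j) ^ (β - 1 - 1)) * v j) t := by
    apply HasDerivAt.fun_sum
    intro j _
    exact (((hasDerivAt_affine (x j) (v j) t).rpow_const
      (Or.inl (hu j).ne')).const_mul (α j)).mul_const (v j)
  convert h using 1
  rw [S2, Finset.mul_sum]
  refine Finset.sum_congr rfl fun j _ => ?_
  rw [show β - 1 - 1 = β - 2 by ring]
  ring

lemma hasDerivAt_L (hA : 0 < A) (α : Fin A → ℝ) (hα : ∀ i, 0 < α i) (β r : ℝ) (hβ0 : β ≠ 0)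
    (γ : Fin A → ℝ) (x v : Fin A → ℝ) (t : ℝ) (hu : ∀ i, 0 < x i + t * v i) :
    HasDerivAt (fun s : ℝ => LF A α β r γ (x + s • v)) (g1 A α β r γ x v t) t := by
  have hfun : (fun s : ℝ => LF A α β r γ (x + s • v)) =
      fun s : ℝ => -((1 - r) / β) * Real.log (∑ j, α j * (x j + s * v j) ^ β)
        - r * ∑ i, γ i * Real.log (x i + s * v i) + ∑ i, (x i + s * v i) := by
    funext s
    simp only [LF, Pi.add_apply, Pi.smul_apply, smul_eq_mul]
  rw [hfun]
  have hS0pos := S0_pos hA α hα β x v t hu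
  have hlog : HasDerivAt (fun s : ℝ => Real.log (∑ j, α j * (x j + s * v j) ^ β))
      ((∑ j, α j * (v j * β * (x j + t * v j) ^ (β - 1))) / S0 A α β x v t) t :=
    (hasDerivAt_sumpow α x v t β hu).log hS0pos.ne'
  have hB : HasDerivAt (fun s : ℝ => ∑ i, γ i * Real.log (x i + s * v i))
      (∑ i, γ i * (v i / (x i + t * v i))) t := by
    apply HasDerivAt.fun_sum
    intro i _
    exact ((hasDerivAt_affine (x i) (v i) t).log (hu i).ne').const_mul (γ i)
  have hC : HasDerivAt (fun s : ℝ => ∑ i, (x i + s * v i)) (∑ i, v i) t := by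
    apply HasDerivAt.fun_sum
    intro i _
    exact hasDerivAt_affine (x i) (v i) t
  have h := ((hlog.const_mul (-((1 - r) / β))).sub (hB.const_mul r)).add hC
  convert h using 1
  · rfl
  · rfl
  · rfl
  have hb : (∑ j, α j * (v j * β * (x j + t * v j) ^ (β - 1))) = β * S1 A α β x v t := by
    rw [S1, Finset.mul_sum]; exact Finset.sum_congr rfl fun j _ => by ring
  rw [g1, hb]
  field_simp
  ring_nf
  simp only [add_comm, mul_comm]

lemma hasDerivAt_g1 (hA : 0 < A) (α : Fin A → ℝ) (hα : ∀ i, 0 < α i) (β r : ℝ)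
    (γ : Fin A → ℝ) (x v : Fin A → ℝ) (t : ℝ) (hu : ∀ i, 0 < x i + t * v i) :
    HasDerivAt (g1 A α β r γ x v) (g2 A α β r γ x v t) t := by
  have hS0pos := S0_pos hA α hα β x v t hu
  have hdiv : HasDerivAt (fun s => S1 A α β x v s / S0 A α β x v s)
      (((β - 1) * S2 A α β x v t * S0 A α β x v t
        - S1 A α β x v t * (β * S1 A α β x v t)) / (S0 A α β x v t) ^ 2) t :=
    (hasDerivAt_S1 α β x v t hu).div (hasDerivAt_S0 α β x v t hu) hS0pos.ne'
  have hB : HasDerivAt (fun s : ℝ => ∑ i, γ i * (v i / (x i + s * v i)))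
      (∑ i, γ i * (-(v i * v i) / (x i + t * v i) ^ 2)) t := by
    apply HasDerivAt.fun_sum
    intro i _
    have hd : HasDerivAt (fun s : ℝ => v i / (x i + s * v i))
        ((0 * (x i + t * v i) - v i * v i) / (x i + t * v i) ^ 2) t :=
      (hasDerivAt_const t (v i)).div (hasDerivAt_affine (x i) (v i) t) (hu i).ne'
    have h := hd.const_mul (γ i)
    convert h using 1
    · rfl
    ring
  have h := ((hdiv.const_mul (-(1 - r))).sub (hB.const_mul r)).add
    (hasDerivAt_const t (∑ i, v i))
  have hfun : g1 A α β r γ x v = fun s =>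
      -(1 - r) * (S1 A α β x v s / S0 A α β x v s)
        - r * ∑ i, γ i * (v i / (x i + s * v i)) + ∑ i, v i := rfl
  rw [hfun]
  convert h using 1
  · rfl
  · rfl
  · rfl
  rw [g2]
  have h2 : ∀ i : Fin A, γ i * (-(v i * v i) / (x i + t * v i) ^ 2)
      = -(γ i * (v i ^ 2 / (x i + t * v i) ^ 2)) := fun i => by ring
  rw [Finset.sum_congr rfl fun i _ => h2 i, Finset.sum_neg_distrib]
  field_simp
  ring_nf
  simp only [add_comm, mul_comm, add_left_comm, mul_left_comm]

lemma cauchy_schwarz (α : Fin A → ℝ) (hα : ∀ i, 0 < α i) (β : ℝ) (x v : Fin A → ℝ) (t : ℝ)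
    (hu : ∀ i, 0 < x i + t * v i) :
    (S1 A α β x v t) ^ 2 ≤ S0 A α β x v t * S2 A α β x v t := by
  have key := Finset.sum_mul_sq_le_sq_mul_sq Finset.univ
    (fun j => Real.sqrt (α j) * (x j + t * v j) ^ (β / 2))
    (fun j => Real.sqrt (α j) * (x j + t * v j) ^ ((β - 2) / 2) * v j)
  have h1 : ∀ j : Fin A, Real.sqrt (α j) * (x j + t * v j) ^ (β / 2) *
      (Real.sqrt (α j) * (x j + t * v j) ^ ((β - 2) / 2) * v j)
      = α j * (x j + t * v j) ^ (β - 1) * v j := by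
    intro j
    rw [show Real.sqrt (α j) * (x j + t * v j) ^ (β / 2) *
        (Real.sqrt (α j) * (x j + t * v j) ^ ((β - 2) / 2) * v j)
      = (Real.sqrt (α j) * Real.sqrt (α j)) *
        ((x j + t * v j) ^ (β / 2) * (x j + t * v j) ^ ((β - 2) / 2)) * v j by ring,
      Real.mul_self_sqrt (hα j).le, ← Real.rpow_add (hu j),
      show β / 2 + (β - 2) / 2 = β - 1 by ring]
  have h2 : ∀ j : Fin A, (Real.sqrt (α j) * (x j + t * v j) ^ (β / 2)) ^ 2
      = α j * (x j + t * v j) ^ β := by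
    intro j
    rw [mul_pow, sq (Real.sqrt (α j)), Real.mul_self_sqrt (hα j).le,
      sq ((x j + t * v j) ^ (β / 2)), ← Real.rpow_add (hu j),
      show β / 2 + β / 2 = β by ring]
  have h3 : ∀ j : Fin A, (Real.sqrt (α j) * (x j + t * v j) ^ ((β - 2) / 2) * v j) ^ 2
      = α j * (x j + t * v j) ^ (β - 2) * v j ^ 2 := by
    intro j
    rw [mul_pow, mul_pow, sq (Real.sqrt (α j)), Real.mul_self_sqrt (hα j).le,
      sq ((x j + t * v j) ^ ((β - 2) / 2)), ← Real.rpow_add (hu j),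
      show (β - 2) / 2 + (β - 2) / 2 = β - 2 by ring]
  rw [Finset.sum_congr rfl fun j _ => h1 j, Finset.sum_congr rfl fun j _ => h2 j,
    Finset.sum_congr rfl fun j _ => h3 j] at key
  exact key

lemma g2_pos (hA : 0 < A) (α : Fin A → ℝ) (hα : ∀ i, 0 < α i)
    (β : ℝ) (hβ : β ≤ 1) (hβ0 : β ≠ 0)
    (r : ℝ) (hr0 : 0 ≤ r) (hr1 : r < 1)
    (γ : Fin A → ℝ) (hγ0 : ∀ i, 0 ≤ γ i)
    (hlin : β = 1 → 0 < r ∧ ∀ i, 0 < γ i)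
    (x v : Fin A → ℝ) (t : ℝ) (hu : ∀ i, 0 < x i + t * v i) (hv : v ≠ 0) :
    0 < g2 A α β r γ x v t := by
  obtain ⟨k, hk⟩ : ∃ k, v k ≠ 0 := by
    by_contra h
    push_neg at h
    exact hv (funext h)
  have hS0 := S0_pos hA α hα β x v t hu
  have hS2 : 0 < S2 A α β x v t := by
    apply Finset.sum_pos'
    · intro j _
      exact mul_nonneg (mul_nonneg (hα j).le (Real.rpow_pos_of_pos (hu j) (β - 2)).le)
        (sq_nonneg _)
    · refine ⟨k, Finset.mem_univ k, ?_⟩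
      have hvk : 0 < v k ^ 2 := lt_of_le_of_ne (sq_nonneg _) (Ne.symm (pow_ne_zero 2 hk))
      exact mul_pos (mul_pos (hα k) (Real.rpow_pos_of_pos (hu k) (β - 2))) hvk
  have hrsum : 0 ≤ r * ∑ i, γ i * (v i ^ 2 / (x i + t * v i) ^ 2) := by
    apply mul_nonneg hr0
    apply Finset.sum_nonneg
    intro i _
    have := hu i
    have := hγ0 i
    positivity
  rw [g2]
  rcases eq_or_lt_of_le hβ with hβ1 | hβlt
  · -- β = 1
    obtain ⟨hrpos, hγpos⟩ := hlin hβ1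
    have hfirst : 0 ≤ (1 - r) * (((1 - β) * S2 A α β x v t * S0 A α β x v t
        + β * (S1 A α β x v t) ^ 2) / (S0 A α β x v t) ^ 2) := by
      apply mul_nonneg (by linarith)
      apply div_nonneg _ (by positivity)
      rw [← hβ1]
      nlinarith [sq_nonneg (S1 A α β x v t)]
    have hsecond : 0 < r * ∑ i, γ i * (v i ^ 2 / (x i + t * v i) ^ 2) := by
      apply mul_pos hrpos
      apply Finset.sum_pos'
      · intro i _
        have := hu i; have := hγ0 i
        positivity
      · refine ⟨k, Finset.mem_univ k, ?_⟩
        have hvk : 0 < v k ^ 2 := lt_of_le_of_ne (sq_nonneg _) (Ne.symm (pow_ne_zero 2 hk))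
        exact mul_pos (hγpos k) (div_pos hvk (pow_pos (hu k) 2))
    linarith
  · rcases lt_or_ge 0 β with hβpos | hβneg
    · -- 0 < β < 1
      have hnum : 0 < (1 - β) * S2 A α β x v t * S0 A α β x v t + β * (S1 A α β x v t) ^ 2 := by
        nlinarith [sq_nonneg (S1 A α β x v t), mul_pos hS2 hS0]
      exact add_pos_of_pos_of_nonneg
        (mul_pos (show (0:ℝ) < 1 - r by linarith) (div_pos hnum (pow_pos hS0 2))) hrsum
    · -- β < 0
      have hβneg' : β < 0 := lt_of_le_of_ne hβneg hβ0
      have key := cauchy_schwarz α hα β x v t hu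
      have hnum : 0 < (1 - β) * S2 A α β x v t * S0 A α β x v t + β * (S1 A α β x v t) ^ 2 := by
        nlinarith [mul_pos hS2 hS0]
      exact add_pos_of_pos_of_nonneg
        (mul_pos (show (0:ℝ) < 1 - r by linarith) (div_pos hnum (pow_pos hS0 2))) hrsum

lemma crit_zero (hA : 0 < A) (α : Fin A → ℝ) (hα : ∀ i, 0 < α i) (β r : ℝ)
    (γ : Fin A → ℝ) (z w : Fin A → ℝ) (hz : ∀ i, 0 < z i)
    (hG : GF A α β r γ z = 0) :
    -(1 - r) * ((∑ j, α j * z j ^ (β - 1) * w j) / (∑ j, α j * z j ^ β))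
      - r * ∑ i, γ i * (w i / z i) + ∑ i, w i = 0 := by
  set S := ∑ j, α j * z j ^ β with hSdef
  have hS : 0 < S := by
    have : Nonempty (Fin A) := ⟨⟨0, hA⟩⟩
    exact Finset.sum_pos (fun j _ => mul_pos (hα j) (Real.rpow_pos_of_pos (hz j) β))
      Finset.univ_nonempty
  have hzi : ∀ i, z i = (1 - r) * (α i * z i ^ β / S) + r * γ i := by
    intro i
    have h := congrFun hG i
    simp only [GF, pF, ← hSdef, Pi.zero_apply] at h
    linarith
  have h1 : ∀ i : Fin A, w i
      = (1 - r) * (α i * z i ^ (β - 1) * w i / S) + r * (γ i * (w i / z i)) := by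
    intro i
    have hzne := (hz i).ne'
    have hpow : z i ^ β = z i ^ (β - 1) * z i := by
      rw [← Real.rpow_add_one hzne (β - 1), sub_add_cancel]
    have h2 := hzi i
    rw [hpow] at h2
    have h3 : z i * (w i / z i) = w i := by field_simp
    calc w i = ((1 - r) * (α i * (z i ^ (β - 1) * z i) / S) + r * γ i) * (w i / z i) := by
          rw [← h2, h3]
      _ = (1 - r) * (α i * z i ^ (β - 1) * w i / S) + r * (γ i * (w i / z i)) := by
          field_simp
  have key : ∑ i, w i
      = (1 - r) * ((∑ j, α j * z j ^ (β - 1) * w j) / S) + r * ∑ i, γ i * (w i / z i) := by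
    rw [Finset.sum_congr rfl fun i _ => h1 i, Finset.sum_add_distrib, ← Finset.mul_sum,
      ← Finset.mul_sum, ← Finset.sum_div]
  linarith [key]

lemma isOpen_T (x v : Fin A → ℝ) : IsOpen {t : ℝ | ∀ i, 0 < x i + t * v i} := by
  have h : {t : ℝ | ∀ i, 0 < x i + t * v i} = ⋂ i, {t : ℝ | 0 < x i + t * v i} := by
    ext t; simp [Set.mem_iInter]
  rw [h]
  refine isOpen_iInter_of_finite fun i => ?_
  exact isOpen_lt continuous_const (by continuity)

lemma deriv_deriv_eq (hA : 0 < A) (α : Fin A → ℝ) (hα : ∀ i, 0 < α i) (β r : ℝ)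
    (hβ0 : β ≠ 0) (γ : Fin A → ℝ) (x v : Fin A → ℝ) (t : ℝ)
    (ht : ∀ i, 0 < x i + t * v i) :
    deriv (deriv (fun s : ℝ => LF A α β r γ (x + s • v))) t = g2 A α β r γ x v t := by
  have hT := isOpen_T x v
  have hmem : t ∈ {t : ℝ | ∀ i, 0 < x i + t * v i} := ht
  have hev : deriv (fun s : ℝ => LF A α β r γ (x + s • v)) =ᶠ[nhds t]
      g1 A α β r γ x v := by
    filter_upwards [hT.mem_nhds hmem] with s hs
    exact (hasDerivAt_L hA α hα β r hβ0 γ x v s hs).deriv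
  rw [hev.deriv_eq]
  exact (hasDerivAt_g1 hA α hα β r γ x v t ht).deriv

end LyapAux

/-- for `β ≤ 1`, `β ≠ 0` and `r ∈ [0,1)` (with `r > 0` and all wages
positive if `β = 1`), the Hessian of the Lyapunov function `L` is positive definite
at every point of the positive orthant (stated via positivity of all second
directional derivatives), hence `L` is strictly convex there, and consequently the
drift field `G` has at most one zero in the open orthant — in particular at most
one zero in the relative interior of the simplex. -/
theorem lyapunov_strictly_convex_unique_zero
    (A : ℕ) (hA : 2 ≤ A) (α : Fin A → ℝ) (hα : ∀ i, 0 < α i)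
    (β : ℝ) (hβ : β ≤ 1) (hβ0 : β ≠ 0)
    (r : ℝ) (hr0 : 0 ≤ r) (hr1 : r < 1)
    (γ : Fin A → ℝ) (hγ0 : ∀ i, 0 ≤ γ i) (hγ1 : ∑ i, γ i = 1)
    (hlin : β = 1 → 0 < r ∧ ∀ i, 0 < γ i) :
    (∀ x ∈ posOrthant A, ∀ v : Fin A → ℝ, v ≠ 0 →
      0 < iteratedDeriv 2 (fun t : ℝ => LF A α β r γ (x + t • v)) 0) ∧
    StrictConvexOn ℝ (posOrthant A) (LF A α β r γ) ∧
    (∀ x ∈ posOrthant A, ∀ y ∈ posOrthant A,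
      GF A α β r γ x = 0 → GF A α β r γ y = 0 → x = y) := by
  have hApos : 0 < A := by omega
  -- segment membership lemma
  have hseg : ∀ x ∈ posOrthant A, ∀ y ∈ posOrthant A, ∀ t ∈ Set.Icc (0:ℝ) 1,
      ∀ i, 0 < x i + t * (y - x) i := by
    intro x hx y hy t ht i
    simp only [Pi.sub_apply]
    rcases eq_or_lt_of_le ht.1 with h | h
    · rw [← h]; simpa using hx i
    · have h1 : 0 ≤ (1 - t) * x i := mul_nonneg (by linarith [ht.2]) (hx i).le
      nlinarith [mul_pos h (hy i)]
  refine ⟨?_, ?_, ?_⟩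
  · -- positive second directional derivatives
    intro x hx v hv
    have h0 : ∀ i, 0 < x i + (0:ℝ) * v i := fun i => by simpa using hx i
    have h2 : iteratedDeriv 2 (fun t : ℝ => LF A α β r γ (x + t • v))
        = deriv (deriv (fun t : ℝ => LF A α β r γ (x + t • v))) := by
      rw [show (2:ℕ) = 1 + 1 by norm_num, iteratedDeriv_succ, iteratedDeriv_one]
    rw [h2, LyapAux.deriv_deriv_eq hApos α hα β r hβ0 γ x v 0 h0]
    exact LyapAux.g2_pos hApos α hα β hβ hβ0 r hr0 hr1 γ hγ0 hlin x v 0 h0 hv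
  · -- strict convexity
    have hconvset : Convex ℝ (posOrthant A) := by
      intro x hx y hy a b ha hb hab i
      simp only [Pi.add_apply, Pi.smul_apply, smul_eq_mul]
      rcases eq_or_lt_of_le ha with h | h
      · have hb1 : b = 1 := by linarith
        rw [← h, hb1]
        simpa using hy i
      · exact add_pos_of_pos_of_nonneg (mul_pos h (hx i)) (mul_nonneg hb (hy i).le)
    refine ⟨hconvset, ?_⟩
    intro x hx y hy hxy a b ha hb hab
    have hv : y - x ≠ 0 := sub_ne_zero.2 (Ne.symm hxy)
    have hsub : ∀ t ∈ Set.Icc (0:ℝ) 1, ∀ i, 0 < x i + t * (y - x) i :=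
      fun t ht => hseg x hx y hy t ht
    have hg : StrictConvexOn ℝ (Set.Icc (0:ℝ) 1)
        (fun s : ℝ => LF A α β r γ (x + s • (y - x))) := by
      apply strictConvexOn_of_deriv2_pos (convex_Icc 0 1)
      · intro t ht
        exact (LyapAux.hasDerivAt_L hApos α hα β r hβ0 γ x (y - x) t
          (hsub t ht)).continuousAt.continuousWithinAt
      · intro t ht
        rw [interior_Icc] at ht
        have htT := hsub t (Set.Ioo_subset_Icc_self ht)
        show 0 < deriv (deriv (fun s : ℝ => LF A α β r γ (x + s • (y - x)))) t
        rw [LyapAux.deriv_deriv_eq hApos α hα β r hβ0 γ x (y - x) t htT]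
        exact LyapAux.g2_pos hApos α hα β hβ hβ0 r hr0 hr1 γ hγ0 hlin x (y - x) t htT hv
    have hkey := hg.2 (Set.left_mem_Icc.2 zero_le_one) (Set.right_mem_Icc.2 zero_le_one)
      (by norm_num) ha hb hab
    simp only [smul_eq_mul, mul_zero, mul_one, zero_add] at hkey
    have e0 : x + (0:ℝ) • (y - x) = x := by simp
    have e1 : x + (1:ℝ) • (y - x) = y := by simp
    have eb : x + b • (y - x) = a • x + b • y := by
      funext i
      simp only [Pi.add_apply, Pi.smul_apply, Pi.sub_apply, smul_eq_mul]
      have : a = 1 - b := by linarith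
      rw [this]; ring
    rw [e0, e1, eb] at hkey
    exact hkey
  · -- uniqueness of zeros
    intro x hx y hy hGx hGy
    by_contra hxy
    have hv : y - x ≠ 0 := sub_ne_zero.2 (Ne.symm hxy)
    have hsub : ∀ t ∈ Set.Icc (0:ℝ) 1, ∀ i, 0 < x i + t * (y - x) i :=
      fun t ht => hseg x hx y hy t ht
    have hmono : StrictMonoOn (LyapAux.g1 A α β r γ x (y - x)) (Set.Icc (0:ℝ) 1) := by
      apply strictMonoOn_of_deriv_pos (convex_Icc 0 1)
      · intro t ht
        exact (LyapAux.hasDerivAt_g1 hApos α hα β r γ x (y - x) t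
          (hsub t ht)).continuousAt.continuousWithinAt
      · intro t ht
        rw [interior_Icc] at ht
        have htT := hsub t (Set.Ioo_subset_Icc_self ht)
        rw [(LyapAux.hasDerivAt_g1 hApos α hα β r γ x (y - x) t htT).deriv]
        exact LyapAux.g2_pos hApos α hα β hβ hβ0 r hr0 hr1 γ hγ0 hlin x (y - x) t htT hv
    have hlt : LyapAux.g1 A α β r γ x (y - x) 0 < LyapAux.g1 A α β r γ x (y - x) 1 :=
      hmono (Set.left_mem_Icc.2 zero_le_one) (Set.right_mem_Icc.2 zero_le_one) zero_lt_one
    have h0 : LyapAux.g1 A α β r γ x (y - x) 0 = 0 := by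
      have hc := LyapAux.crit_zero hApos α hα β r γ x (y - x) hx hGx
      simp only [LyapAux.g1, LyapAux.S1, LyapAux.S0, zero_mul, add_zero]
      simpa using hc
    have h1 : LyapAux.g1 A α β r γ x (y - x) 1 = 0 := by
      have hc := LyapAux.crit_zero hApos α hα β r γ y (y - x) hy hGy
      simp only [LyapAux.g1, LyapAux.S1, LyapAux.S0, one_mul, Pi.sub_apply,
        add_sub_cancel]
      simpa [Pi.sub_apply] using hc
    rw [h0, h1] at hlt
    exact lt_irrefl 0 hlt
end

section
/- Assume equal weights α_1 = … = α_A and let x* = (1/A, …, 1/A) be the uniform point of the simplex. Then for every β ∈ ℝ, every r ∈ [0,1] and all indices i ≠ j, the drift field G (extended to the positive orthant) satisfies ∂G_i/∂x_i(x*) − ∂G_i/∂x_j(x*) = (1−r)β − 1; this quantity is negative if and only if r > (β−1)/β when β > 0, which is the stability criterion for the uniform fixed point. -/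
/-!
Differentiating the quotient gives `∂p_i/∂x_m = (β / x_m) p_m (δ_im - p_i)`. At the uniform
point every `p_k` equals `1/A = x_k`, so `∂G_i/∂x_i = (1-r)β(1 - 1/A) - 1` and
`∂G_i/∂x_j = -(1-r)β/A`, whose difference is `(1-r)β - 1`.
-/

open scoped BigOperators

open Function

section
variable {A : ℕ} {α : Fin A → ℝ} {β : ℝ} {x : Fin A → ℝ} {m : Fin A}

theorem hasDerivAt_update_rpow (hx : x m ≠ 0) (k : Fin A) :
    HasDerivAt (fun t => update x m t k ^ β)
      ((Pi.single m (β * x m ^ (β - 1)) : Fin A → ℝ) k) (x m) := by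
  rcases eq_or_ne k m with rfl | hk
  · simpa using Real.hasDerivAt_rpow_const (p := β) (Or.inl hx)
  · simpa [update_of_ne hk, hk] using hasDerivAt_const (x m) (x k ^ β)

theorem hasDerivAt_sum_update_rpow (hx : x m ≠ 0) :
    HasDerivAt (fun t => ∑ k, α k * update x m t k ^ β) (α m * (β * x m ^ (β - 1))) (x m) := by
  have := HasDerivAt.fun_sum (u := Finset.univ)
    fun k _ => (hasDerivAt_update_rpow (β := β) hx k).const_mul (α k)
  simpa [Pi.single_apply] using this

theorem hasDerivAt_pF_update (hx : x m ≠ 0) (hS : ∑ k, α k * x k ^ β ≠ 0) (i : Fin A) :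
    HasDerivAt (fun t => pF A α β (update x m t) i)
      (β / x m * pF A α β x m * ((Pi.single m 1 : Fin A → ℝ) i - pF A α β x i)) (x m) := by
  have hnum : HasDerivAt (fun t => α i * update x m t i ^ β)
      (α i * (Pi.single m (β * x m ^ (β - 1)) : Fin A → ℝ) i) (x m) :=
    (hasDerivAt_update_rpow hx i).const_mul (α i)
  refine (hnum.fun_div (hasDerivAt_sum_update_rpow hx) (by simpa using hS)).congr_deriv ?_
  rw [update_eq_self, Real.rpow_sub_one hx]
  unfold pF
  rcases eq_or_ne i m with rfl | hi
  · simp only [Pi.single_eq_same]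
    field_simp
  · simp only [Pi.single_eq_of_ne hi]
    field_simp
    ring

theorem hasDerivAt_GF_update (r : ℝ) (γ : Fin A → ℝ) (hx : x m ≠ 0)
    (hS : ∑ k, α k * x k ^ β ≠ 0) (i : Fin A) :
    HasDerivAt (fun t => GF A α β r γ (update x m t) i)
      ((1 - r) * (β / x m * pF A α β x m * ((Pi.single m 1 : Fin A → ℝ) i - pF A α β x i))
        - (Pi.single m 1 : Fin A → ℝ) i) (x m) :=
  (((hasDerivAt_pF_update hx hS i).const_mul (1 - r)).add_const (r * γ i)).sub
    (hasDerivAt_pi.1 (hasDerivAt_update x m (x m)) i)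

end

section
variable {A : ℕ} {α x : Fin A → ℝ} {a c β : ℝ}

theorem sum_mul_rpow_of_forall_eq (hα : ∀ k, α k = a) (hx : ∀ k, x k = c) :
    ∑ k, α k * x k ^ β = A * (a * c ^ β) := by
  simp only [hα, hx, Finset.sum_const, Finset.card_univ, Fintype.card_fin, nsmul_eq_mul]

theorem pF_of_forall_eq (hα : ∀ k, α k = a) (hx : ∀ k, x k = c) (hac : a * c ^ β ≠ 0)
    (i : Fin A) : pF A α β x i = 1 / A := by
  rw [pF, sum_mul_rpow_of_forall_eq hα hx, hα, hx, div_mul_cancel_right₀ hac, one_div]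

end

theorem one_sub_mul_sub_one_neg_iff {β r : ℝ} (hβ : 0 < β) :
    (1 - r) * β - 1 < 0 ↔ (β - 1) / β < r := by
  rw [div_lt_iff₀ hβ]
  constructor <;> intro h <;> linarith

theorem uniform_fixed_point_stability_criterion_general
    (A : ℕ) (hA : 2 ≤ A) (a : ℝ) (ha : 0 < a) (α : Fin A → ℝ) (hα : ∀ i, α i = a)
    (β : ℝ) (r : ℝ)
    (γ : Fin A → ℝ)
    (xstar : Fin A → ℝ) (hxstar : ∀ i, xstar i = 1 / A)
    (i j : Fin A) (hij : i ≠ j) :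
    ∃ d₁ d₂ : ℝ,
      HasDerivAt (fun t : ℝ => GF A α β r γ (Function.update xstar i t) i) d₁ (xstar i) ∧
      HasDerivAt (fun t : ℝ => GF A α β r γ (Function.update xstar j t) i) d₂ (xstar j) ∧
      d₁ - d₂ = (1 - r) * β - 1 ∧
      (0 < β → (d₁ - d₂ < 0 ↔ (β - 1) / β < r)) := by
  have hA0 : (0 : ℝ) < A := by exact_mod_cast (show 0 < A by omega)
  have hx : ∀ k, xstar k ≠ 0 := fun k => by rw [hxstar]; positivity
  have hp : ∀ k, pF A α β xstar k = 1 / A :=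
    pF_of_forall_eq hα hxstar (by positivity)
  have hS : ∑ k, α k * xstar k ^ β ≠ 0 := by
    rw [sum_mul_rpow_of_forall_eq hα hxstar]
    positivity
  have hdiff : (1 - r) * β * (1 - 1 / A) - 1 - -((1 - r) * β / A) = (1 - r) * β - 1 := by
    field_simp
    ring
  refine ⟨_, _, ?_, ?_, hdiff, fun hβ => hdiff ▸ one_sub_mul_sub_one_neg_iff hβ⟩
  · refine (hasDerivAt_GF_update r γ (hx i) hS i).congr_deriv ?_
    simp only [Pi.single_eq_same, hp, hxstar]
    field_simp
  · refine (hasDerivAt_GF_update r γ (hx j) hS i).congr_deriv ?_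
    simp only [Pi.single_eq_of_ne hij, hp, hxstar]
    field_simp
    ring

/-- with equal weights and the uniform point `x* = (1/A,…,1/A)`, for
every `β ∈ ℝ`, `r ∈ [0,1]` and `i ≠ j`, the partial derivatives of the drift field
satisfy `∂G_i/∂x_i(x*) - ∂G_i/∂x_j(x*) = (1-r)β - 1`; for `β > 0` this quantity is
negative iff `r > (β-1)/β` (the stability criterion for the uniform fixed point). -/
theorem uniform_fixed_point_stability_criterion
    (A : ℕ) (hA : 2 ≤ A) (a : ℝ) (ha : 0 < a) (α : Fin A → ℝ) (hα : ∀ i, α i = a)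
    (β : ℝ) (r : ℝ) (hr : r ∈ Set.Icc (0 : ℝ) 1)
    (γ : Fin A → ℝ) (hγ0 : ∀ i, 0 ≤ γ i) (hγ1 : ∑ i, γ i = 1)
    (xstar : Fin A → ℝ) (hxstar : ∀ i, xstar i = 1 / A)
    (i j : Fin A) (hij : i ≠ j) :
    ∃ d₁ d₂ : ℝ,
      HasDerivAt (fun t : ℝ => GF A α β r γ (Function.update xstar i t) i) d₁ (xstar i) ∧
      HasDerivAt (fun t : ℝ => GF A α β r γ (Function.update xstar j t) i) d₂ (xstar j) ∧
      d₁ - d₂ = (1 - r) * β - 1 ∧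
      (0 < β → (d₁ - d₂ < 0 ↔ (β - 1) / β < r)) :=
  uniform_fixed_point_stability_criterion_general A hA a ha α hα β r γ xstar hxstar i j hij
end
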